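/- arXiv:2011.03300 — 2 statements merged into one kernel-verified Lean document; each statement's English description precedes it below -/
import Mathlib

section
/- Let A be a densely defined symmetric operator on a Hilbert space H, and B a densely defined operator with D(A) ⊆ D(B) such that for all a > 0 there exists b ≥ 0 with ‖Bu‖ ≤ a‖Au‖ + b‖u‖ for all u ∈ D(A). Then a sequence (uₙ) ⊂ D(A) with uₙ → u and A uₙ Cauchy implies B uₙ is Cauchy; consequently D(closure of A) ⊆ D(closure of (A+B)) and in fact D(closure of A) = D(closure of (A+B)). -/
/-!
Applied to differences, `‖B u‖ ≤ ½‖A u‖ + b‖u‖` makes `B u` Cauchy whenever `u` and `A u` are,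
and its consequence `‖A u‖ ≤ 2‖(A + B) u‖ + 2b‖u‖` makes `A u` Cauchy whenever `u` and
`(A + B) u` are. So, `H` being complete, the closures of the graphs of `A` and `A + B` have the
same projection to the first factor. Passing to the limit in the bound along a sequence `u → 0`
gives `‖lim B u‖ ≤ ½‖lim A u‖`, which shows that `A` and `A + B` are closable together; when they
are not, both closures are the operators themselves, whose domains agree since `D(A) ⊆ D(B)`.
-/

open Filter Topology Set

theorem mk_mem_closure_range_iff_seq {V X Y : Type*} [TopologicalSpace X] [TopologicalSpace Y]
    [FrechetUrysohnSpace (X × Y)] (f : V → X) (g : V → Y) {x : X} {y : Y} :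
    (x, y) ∈ closure (range fun v => (f v, g v)) ↔
      ∃ u : ℕ → V, Tendsto (f ∘ u) atTop (𝓝 x) ∧ Tendsto (g ∘ u) atTop (𝓝 y) := by
  simp only [mem_closure_iff_seq_limit, mem_range, Prod.tendsto_iff]
  constructor
  · rintro ⟨s, hs, hlim⟩
    choose u hu using hs
    simp only [← hu] at hlim
    exact ⟨u, hlim⟩
  · rintro ⟨u, hlim⟩
    exact ⟨_, fun n => ⟨u n, rfl⟩, hlim⟩

section RelativeBound

variable {R V E F : Type*} [Semiring R] [AddCommGroup V] [Module R V]
  [SeminormedAddCommGroup E] [Module R E] [SeminormedAddCommGroup F] [Module R F]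
  {ι : V →ₗ[R] E} {S T : V →ₗ[R] F} {a b : ℝ}

theorem cauchySeq_comp_of_relBound (hT : ∀ v, ‖T v‖ ≤ a * ‖S v‖ + b * ‖ι v‖) {u : ℕ → V}
    (hι : CauchySeq (ι ∘ u)) (hS : CauchySeq (S ∘ u)) : CauchySeq (T ∘ u) := by
  rw [cauchySeq_iff_tendsto_dist_atTop_0] at hι hS ⊢
  refine squeeze_zero (fun _ => dist_nonneg) (fun p => ?_)
    (by simpa using (hS.const_mul a).add (hι.const_mul b))
  simpa only [Function.comp_apply, dist_eq_norm, map_sub] using hT (u p.1 - u p.2)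

theorem norm_le_of_relBound_add (ha : a < 1) (hT : ∀ v, ‖T v‖ ≤ a * ‖S v‖ + b * ‖ι v‖) (v : V) :
    ‖S v‖ ≤ (1 - a)⁻¹ * ‖(S + T) v‖ + (1 - a)⁻¹ * b * ‖ι v‖ := by
  have hST : ‖S v‖ ≤ ‖(S + T) v‖ + ‖T v‖ := by
    simpa using norm_sub_le ((S + T) v) (T v)
  rw [mul_assoc, ← mul_add, le_inv_mul_iff₀ (sub_pos.mpr ha)]
  linarith [hT v]

theorem cauchySeq_comp_of_cauchySeq_add (ha : a < 1)
    (hT : ∀ v, ‖T v‖ ≤ a * ‖S v‖ + b * ‖ι v‖) {u : ℕ → V}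
    (hι : CauchySeq (ι ∘ u)) (hST : CauchySeq ((S + T) ∘ u)) : CauchySeq (S ∘ u) :=
  cauchySeq_comp_of_relBound (norm_le_of_relBound_add ha hT) hι hST

theorem norm_le_of_tendsto_relBound (hT : ∀ v, ‖T v‖ ≤ a * ‖S v‖ + b * ‖ι v‖) {u : ℕ → V}
    {y z : F} (hι : Tendsto (ι ∘ u) atTop (𝓝 0)) (hS : Tendsto (S ∘ u) atTop (𝓝 y))
    (hTu : Tendsto (T ∘ u) atTop (𝓝 z)) : ‖z‖ ≤ a * ‖y‖ :=
  le_of_tendsto_of_tendsto' hTu.norm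
    (by simpa using (hS.norm.const_mul a).add (hι.norm.const_mul b)) fun n => hT (u n)

theorem exists_mem_closure_range_add_iff [CompleteSpace F] (ha : a < 1)
    (hT : ∀ v, ‖T v‖ ≤ a * ‖S v‖ + b * ‖ι v‖) {x : E} :
    (∃ y, (x, y) ∈ closure (range fun v => (ι v, S v))) ↔
      ∃ y, (x, y) ∈ closure (range fun v => (ι v, (S + T) v)) := by
  simp only [mk_mem_closure_range_iff_seq]
  constructor
  · rintro ⟨y, u, hx, hy⟩
    obtain ⟨z, hz⟩ := cauchySeq_tendsto_of_complete
      (cauchySeq_comp_of_relBound hT hx.cauchySeq hy.cauchySeq)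
    exact ⟨y + z, u, hx, hy.add hz⟩
  · rintro ⟨w, u, hx, hw⟩
    obtain ⟨y, hy⟩ := cauchySeq_tendsto_of_complete
      (cauchySeq_comp_of_cauchySeq_add ha hT hx.cauchySeq hw.cauchySeq)
    exact ⟨y, u, hx, hy⟩

end RelativeBound

theorem forall_zero_mem_closure_range_add_iff {R V E F : Type*} [Semiring R] [AddCommGroup V]
    [Module R V] [SeminormedAddCommGroup E] [Module R E] [NormedAddCommGroup F] [Module R F]
    [CompleteSpace F] {ι : V →ₗ[R] E} {S T : V →ₗ[R] F} {a b : ℝ} (ha : a < 1)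
    (hT : ∀ v, ‖T v‖ ≤ a * ‖S v‖ + b * ‖ι v‖) :
    (∀ y, ((0 : E), y) ∈ closure (range fun v => (ι v, S v)) → y = 0) ↔
      ∀ y, ((0 : E), y) ∈ closure (range fun v => (ι v, (S + T) v)) → y = 0 := by
  simp only [mk_mem_closure_range_iff_seq]
  constructor
  · rintro hS_zero w ⟨u, h0, hw⟩
    obtain ⟨y, hy⟩ := cauchySeq_tendsto_of_complete
      (cauchySeq_comp_of_cauchySeq_add ha hT h0.cauchySeq hw.cauchySeq)
    obtain rfl := hS_zero y ⟨u, h0, hy⟩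
    have hTu : Tendsto (T ∘ u) atTop (𝓝 w) := by simpa [Function.comp_def] using hw.sub hy
    simpa using norm_le_of_tendsto_relBound hT h0 hy hTu
  · rintro hST_zero y ⟨u, h0, hy⟩
    obtain ⟨z, hz⟩ := cauchySeq_tendsto_of_complete
      (cauchySeq_comp_of_relBound hT h0.cauchySeq hy.cauchySeq)
    have hz_eq : z = -y := eq_neg_of_add_eq_zero_right (hST_zero _ ⟨u, h0, hy.add hz⟩)
    have hy_le : ‖y‖ ≤ a * ‖y‖ := by
      simpa [hz_eq] using norm_le_of_tendsto_relBound hT h0 hy hz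
    exact norm_le_zero_iff.mp (by nlinarith [norm_nonneg y])

namespace LinearPMap

section Closable

variable {R E F : Type*} [CommRing R] [AddCommGroup E] [AddCommGroup F] [Module R E] [Module R F]
  [TopologicalSpace E] [TopologicalSpace F] [ContinuousAdd E] [ContinuousAdd F]
  [TopologicalSpace R] [ContinuousSMul R E] [ContinuousSMul R F]

theorem isClosable_iff_forall_zero_mem_closure {f : E →ₗ.[R] F} :
    f.IsClosable ↔ ∀ y : F, ((0 : E), y) ∈ _root_.closure (f.graph : Set (E × F)) → y = 0 := by
  simp_rw [← Submodule.topologicalClosure_coe, SetLike.mem_coe]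
  constructor
  · intro hf y hy
    rw [hf.graph_closure_eq_closure_graph] at hy
    exact f.closure.graph_fst_eq_zero_snd hy rfl
  · rintro h
    refine ⟨_, (Submodule.toLinearPMap_graph_eq _ ?_).symm⟩
    rintro ⟨x, y⟩ hxy (rfl : x = 0)
    exact h y hxy

theorem IsClosable.mem_closure_domain_iff {f : E →ₗ.[R] F} (hf : f.IsClosable) {x : E} :
    x ∈ f.closure.domain ↔ ∃ y : F, (x, y) ∈ _root_.closure (f.graph : Set (E × F)) := by
  simp_rw [mem_domain_iff, ← hf.graph_closure_eq_closure_graph, ← SetLike.mem_coe,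
    Submodule.topologicalClosure_coe]

end Closable

variable {R E F : Type*} [CommRing R] [AddCommGroup E] [AddCommGroup F] [Module R E] [Module R F]

theorem coe_graph_eq_range (f : E →ₗ.[R] F) :
    (f.graph : Set (E × F)) = range fun v => (f.domain.subtype v, f.toFun v) := by
  ext x
  rw [SetLike.mem_coe, mem_graph_iff']
  rfl

theorem coe_graph_add_eq_range {A B : E →ₗ.[R] F} (hsub : A.domain ≤ B.domain) :
    ((A + B).graph : Set (E × F)) =
      range fun v => (A.domain.subtype v, (A.toFun + B.toFun ∘ₗ Submodule.inclusion hsub) v) := by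
  ext ⟨x, y⟩
  simp only [SetLike.mem_coe, mem_graph_iff, mem_range, Prod.mk.injEq]
  constructor
  · rintro ⟨v, rfl, rfl⟩
    exact ⟨⟨v, v.2.1⟩, rfl, (add_apply A B v).symm⟩
  · rintro ⟨v, rfl, rfl⟩
    exact ⟨⟨v, v.2, hsub v.2⟩, rfl, add_apply A B _⟩

end LinearPMap

theorem kato_rellich_closure_domain_general
    {H : Type*} [NormedAddCommGroup H] [InnerProductSpace ℂ H] [CompleteSpace H]
    (A B : H →ₗ.[ℂ] H)
    (hsub : A.domain ≤ B.domain)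
    (hsmall : ∀ a > (0:ℝ), ∃ b ≥ (0:ℝ), ∀ u : A.domain,
      ‖B ⟨(u : H), hsub u.2⟩‖ ≤ a * ‖A u‖ + b * ‖(u : H)‖) :
    (∀ (u : ℕ → A.domain) (x : H),
      Filter.Tendsto (fun n => ((u n : H))) Filter.atTop (nhds x) →
      CauchySeq (fun n => A (u n)) →
      CauchySeq (fun n => B ⟨(u n : H), hsub (u n).2⟩)) ∧
    A.closure.domain = (A + B).closure.domain := by
  obtain ⟨b, -, hb⟩ := hsmall (1 / 2) (by norm_num)
  have ha : (1 / 2 : ℝ) < 1 := by norm_num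
  have hT : ∀ v, ‖(B.toFun ∘ₗ Submodule.inclusion hsub) v‖ ≤
      1 / 2 * ‖A.toFun v‖ + b * ‖A.domain.subtype v‖ := hb
  have hclosable : A.IsClosable ↔ (A + B).IsClosable := by
    simp only [LinearPMap.isClosable_iff_forall_zero_mem_closure, LinearPMap.coe_graph_eq_range,
      LinearPMap.coe_graph_add_eq_range hsub]
    exact forall_zero_mem_closure_range_add_iff ha hT
  refine ⟨fun u x hx hA => cauchySeq_comp_of_relBound hT hx.cauchySeq hA, ?_⟩
  by_cases hA : A.IsClosable
  · ext x
    rw [hA.mem_closure_domain_iff, (hclosable.mp hA).mem_closure_domain_iff,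
      LinearPMap.coe_graph_eq_range, LinearPMap.coe_graph_add_eq_range hsub]
    exact exists_mem_closure_range_add_iff ha hT
  · rw [LinearPMap.closure_def' hA, LinearPMap.closure_def' (hclosable.not.mp hA)]
    exact (inf_eq_left.mpr hsub).symm

/-- Kato–Rellich type stability of the closure domain: if `B` is infinitesimally
small with respect to a densely defined symmetric operator `A` (with
`D(A) ⊆ D(B)`), then convergent sequences with `A`-Cauchy images are `B`-Cauchy,
and the domains of the closures of `A` and `A + B` coincide. -/
theorem kato_rellich_closure_domain
    {H : Type*} [NormedAddCommGroup H] [InnerProductSpace ℂ H] [CompleteSpace H]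
    (A B : H →ₗ.[ℂ] H)
    (hAdense : Dense (A.domain : Set H))
    (hBdense : Dense (B.domain : Set H))
    (hsym : ∀ u v : A.domain, (inner ℂ (A u) (v : H) : ℂ) = inner ℂ (u : H) (A v))
    (hsub : A.domain ≤ B.domain)
    (hsmall : ∀ a > (0:ℝ), ∃ b ≥ (0:ℝ), ∀ u : A.domain,
      ‖B ⟨(u : H), hsub u.2⟩‖ ≤ a * ‖A u‖ + b * ‖(u : H)‖) :
    (∀ (u : ℕ → A.domain) (x : H),
      Filter.Tendsto (fun n => ((u n : H))) Filter.atTop (nhds x) →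
      CauchySeq (fun n => A (u n)) →
      CauchySeq (fun n => B ⟨(u n : H), hsub (u n).2⟩)) ∧
    A.closure.domain = (A + B).closure.domain :=
  kato_rellich_closure_domain_general A B hsub hsmall
end

section
/- Let α₋ = 1/2 - √(1-2c) for c ∈ (0,1/2), c ≠ 3/8. The function h(x) = x^{α₋} P(x), where P is a smooth cutoff equal to 1 on (0, ε/2] and 0 on [ε, ∞), belongs to L²((0,∞), dx), and h is not o(x^{3/2}) as x → 0⁺; moreover -h'' + ((3/4 - 2c)/x²) h ∈ L²((0,∞), dx). -/
open Real MeasureTheory Set Filter Topology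

/-- For `c ∈ (0,1/2)`, `c ≠ 3/8`, the cut-off quasi-solution `h(x) = x^{α₋} P(x)`
with `α₋ = 1/2 - √(1-2c)` is in `L²((0,∞))`, is not `o(x^{3/2})` as `x → 0⁺`,
and `-h'' + ((3/4-2c)/x²)h ∈ L²((0,∞))`. -/
theorem adjoint_domain_element (c : ℝ) (hc : c ∈ Set.Ioo (0:ℝ) (1/2)) (hc' : c ≠ 3/8)
    (ε : ℝ) (hε : 0 < ε) (P : ℝ → ℝ) (hP : ContDiff ℝ (⊤ : ℕ∞) P)
    (hP01 : ∀ x, 0 ≤ P x ∧ P x ≤ 1)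
    (hP1 : ∀ x ∈ Set.Ioc (0:ℝ) (ε/2), P x = 1)
    (hP0 : ∀ x ≥ ε, P x = 0) :
    let α : ℝ := 1/2 - Real.sqrt (1 - 2*c)
    let h : ℝ → ℝ := fun x => x ^ α * P x
    IntegrableOn (fun x : ℝ => (h x)^2) (Set.Ioi 0) ∧
    ¬ Tendsto (fun x : ℝ => h x / x ^ ((3:ℝ)/2)) (𝓝[>] 0) (𝓝 0) ∧
    IntegrableOn (fun x : ℝ => (-(deriv (deriv h) x) + (3/4 - 2*c)/x^2 * h x)^2)
      (Set.Ioi 0) := by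
  intro α h
  have hc1 : (0:ℝ) < c := hc.1
  have hc2 : c < 1/2 := hc.2
  set s : ℝ := Real.sqrt (1 - 2*c) with hs_def
  have h12c : (0:ℝ) < 1 - 2*c := by linarith
  have hs2 : s^2 = 1 - 2*c := Real.sq_sqrt h12c.le
  have hs0 : 0 < s := Real.sqrt_pos.mpr h12c
  have hs1 : s < 1 := by nlinarith
  have hα_lt : α < 1/2 := by simp only [α]; linarith
  have hα_gt : -(1/2) < α := by simp only [α]; linarith
  have hαα : α * (α - 1) = 3/4 - 2*c := by
    have : α = 1/2 - s := rfl
    rw [this]; nlinarith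
  -- P derivatives
  have hPdiff : Differentiable ℝ P := hP.differentiable (by simp)
  have hPinf : ContDiff ℝ (↑(⊤:ℕ∞)) P := hP.of_le (by simp)
  have hP' : ContDiff ℝ (↑(⊤:ℕ∞)) (deriv P) := (contDiff_infty_iff_deriv.mp hPinf).2
  have hP'diff : Differentiable ℝ (deriv P) := hP'.differentiable (by simp)
  have hP'' : Continuous (deriv (deriv P)) := (contDiff_infty_iff_deriv.mp hP').2.continuous
  -- vanishing of derivatives on (0, ε/2) and (ε, ∞)
  have hP'0a : ∀ x ∈ Ioo (0:ℝ) (ε/2), deriv P x = 0 := by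
    intro x hx
    have he : P =ᶠ[𝓝 x] fun _ => (1:ℝ) := by
      filter_upwards [Ioo_mem_nhds hx.1 hx.2] with y hy using hP1 y ⟨hy.1, hy.2.le⟩
    rw [he.deriv_eq]; exact deriv_const x 1
  have hP''0a : ∀ x ∈ Ioo (0:ℝ) (ε/2), deriv (deriv P) x = 0 := by
    intro x hx
    have he : deriv P =ᶠ[𝓝 x] fun _ => (0:ℝ) := by
      filter_upwards [Ioo_mem_nhds hx.1 hx.2] with y hy using hP'0a y hy
    rw [he.deriv_eq]; exact deriv_const x 0
  have hP'0b : ∀ x ∈ Ioi ε, deriv P x = 0 := by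
    intro x hx
    have he : P =ᶠ[𝓝 x] fun _ => (0:ℝ) := by
      filter_upwards [Ioi_mem_nhds hx] with y hy using hP0 y hy.le
    rw [he.deriv_eq]; exact deriv_const x 0
  have hP''0b : ∀ x ∈ Ioi ε, deriv (deriv P) x = 0 := by
    intro x hx
    have he : deriv P =ᶠ[𝓝 x] fun _ => (0:ℝ) := by
      filter_upwards [Ioi_mem_nhds hx] with y hy using hP'0b y hy
    rw [he.deriv_eq]; exact deriv_const x 0
  -- continuity of h on Ioi 0
  have hrpow_cont : ∀ (p : ℝ), ContinuousOn (fun x : ℝ => x ^ p) (Ioi 0) := by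
    intro p x hx
    exact (Real.continuousAt_rpow_const x p (Or.inl (ne_of_gt hx))).continuousWithinAt
  have hhcont : ContinuousOn h (Ioi 0) :=
    (hrpow_cont α).mul hP.continuous.continuousOn
  refine ⟨?_, ?_, ?_⟩
  · -- L² of h
    have hg : IntegrableOn (fun x : ℝ => x ^ (α * 2)) (Ioc 0 ε) := by
      rw [← intervalIntegrable_iff_integrableOn_Ioc_of_le hε.le]
      exact intervalIntegral.intervalIntegrable_rpow' (by simp only [α] at *; linarith)
    have h1 : IntegrableOn (fun x : ℝ => (h x)^2) (Ioc 0 ε) := by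
      refine Integrable.mono' hg ?_ ?_
      · exact (((hhcont.mono Ioc_subset_Ioi_self).pow 2)).aestronglyMeasurable measurableSet_Ioc
      · filter_upwards [ae_restrict_mem measurableSet_Ioc] with x hx
        have hx0 : (0:ℝ) < x := hx.1
        have hsq : (x ^ α)^2 = x ^ (α * 2) := by
          rw [Real.rpow_mul hx0.le, Real.rpow_two]
        have hP2 : (P x)^2 ≤ 1 := by nlinarith [(hP01 x).1, (hP01 x).2]
        have h0 : (0:ℝ) ≤ (x ^ α)^2 := sq_nonneg _
        calc ‖(h x)^2‖ = (x ^ α)^2 * (P x)^2 := by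
              rw [Real.norm_eq_abs, abs_of_nonneg (sq_nonneg _)]; simp [h, mul_pow]
          _ ≤ (x ^ α)^2 * 1 := by nlinarith
          _ = x ^ (α * 2) := by rw [mul_one, hsq]
    have h2 : IntegrableOn (fun x : ℝ => (h x)^2) (Ioi ε) := by
      refine (integrableOn_zero).congr_fun ?_ measurableSet_Ioi
      intro x hx
      simp [h, hP0 x (le_of_lt hx)]
    rw [← Ioc_union_Ioi_eq_Ioi hε.le]
    exact h1.union h2
  · -- not o(x^{3/2})
    intro hT
    have hev : ∀ᶠ x in 𝓝[>] (0:ℝ), 1 ≤ h x / x ^ ((3:ℝ)/2) := by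
      have hmem : Ioo (0:ℝ) (min (ε/2) 1) ∈ 𝓝[>] (0:ℝ) :=
        Ioo_mem_nhdsGT_of_mem ⟨le_refl 0, lt_min (half_pos hε) one_pos⟩
      filter_upwards [hmem] with x hx
      have hx0 : (0:ℝ) < x := hx.1
      have hxε : x ≤ ε/2 := le_of_lt (lt_of_lt_of_le hx.2 (min_le_left _ _))
      have hx1 : x ≤ 1 := le_of_lt (lt_of_lt_of_le hx.2 (min_le_right _ _))
      have hPx : P x = 1 := hP1 x ⟨hx0, hxε⟩
      have : h x / x ^ ((3:ℝ)/2) = x ^ (α - 3/2) := by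
        simp only [h, hPx, mul_one]
        rw [← Real.rpow_sub hx0]
      rw [this]
      exact Real.one_le_rpow_of_pos_of_le_one_of_nonpos hx0 hx1 (by linarith)
    have hlt : ∀ᶠ x in 𝓝[>] (0:ℝ), h x / x ^ ((3:ℝ)/2) < 1 :=
      hT.eventually (gt_mem_nhds one_pos)
    obtain ⟨x, hx1, hx2⟩ := (hev.and hlt).exists
    linarith
  · -- residual in L²
    -- first derivative of h on Ioi 0
    have hder1 : ∀ x ∈ Ioi (0:ℝ),
        HasDerivAt h (α * x ^ (α-1) * P x + x ^ α * deriv P x) x := by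
      intro x hx
      exact (Real.hasDerivAt_rpow_const (Or.inl (ne_of_gt hx))).mul (hPdiff x).hasDerivAt
    have hderiv_h : ∀ x ∈ Ioi (0:ℝ),
        deriv h x = α * x ^ (α-1) * P x + x ^ α * deriv P x := fun x hx =>
      (hder1 x hx).deriv
    -- second derivative on Ioi 0
    have hder2 : ∀ x ∈ Ioi (0:ℝ),
        deriv (deriv h) x = α * ((α-1) * x ^ (α-2)) * P x + α * x ^ (α-1) * deriv P x
          + (α * x ^ (α-1) * deriv P x + x ^ α * deriv (deriv P) x) := by
      intro x hx
      have heq : deriv h =ᶠ[𝓝 x]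
          fun y => α * y ^ (α-1) * P y + y ^ α * deriv P y := by
        filter_upwards [Ioi_mem_nhds hx] with y hy using hderiv_h y hy
      rw [heq.deriv_eq]
      have hd1 : HasDerivAt (fun y : ℝ => α * y ^ (α-1) * P y)
          (α * ((α-1) * x ^ (α-1-1)) * P x + α * x ^ (α-1) * deriv P x) x := by
        exact ((Real.hasDerivAt_rpow_const
          (Or.inl (ne_of_gt hx))).const_mul α).mul (hPdiff x).hasDerivAt
      have hd2 : HasDerivAt (fun y : ℝ => y ^ α * deriv P y)
          (α * x ^ (α-1) * deriv P x + x ^ α * deriv (deriv P) x) x :=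
        (Real.hasDerivAt_rpow_const (Or.inl (ne_of_gt hx))).mul (hP'diff x).hasDerivAt
      have : deriv (fun y => α * y ^ (α-1) * P y + y ^ α * deriv P y) x = _ :=
        (hd1.add hd2).deriv
      rw [this]
      ring_nf
    -- the residual equals the cutoff-error term
    set F : ℝ → ℝ :=
      fun x => (-(2 * α * x ^ (α-1) * deriv P x + x ^ α * deriv (deriv P) x))^2 with hF
    have hres : ∀ x ∈ Ioi (0:ℝ),
        (-(deriv (deriv h) x) + (3/4 - 2*c)/x^2 * h x)^2 = F x := by
      intro x hx
      have hx0 : (0:ℝ) < x := hx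
      have hxα : (3/4 - 2*c)/x^2 * h x = α * (α-1) * x ^ (α-2) * P x := by
        have hpow : x ^ (α-2) = x ^ α / x^2 := by
          rw [Real.rpow_sub hx0, Real.rpow_two]
        simp only [h]
        rw [hpow, ← hαα]
        field_simp
      rw [hder2 x hx, hxα, hF]
      ring
    -- F is continuous on Ioi 0
    have hFcont : ContinuousOn F (Ioi 0) := by
      apply ContinuousOn.pow
      apply ContinuousOn.neg
      exact (((continuousOn_const.mul (hrpow_cont (α-1))).mul
        hP'.continuous.continuousOn).add ((hrpow_cont α).mul hP''.continuousOn))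
    -- integrability of F on Ioi 0
    have hKsub : Icc (ε/2) ε ⊆ Ioi (0:ℝ) := fun x hx => lt_of_lt_of_le (half_pos hε) hx.1
    have hInt1 : IntegrableOn F (Icc (ε/2) ε) :=
      (hFcont.mono hKsub).integrableOn_compact isCompact_Icc
    have hInt2 : IntegrableOn F (Ioi 0 \ Icc (ε/2) ε) := by
      refine (integrableOn_zero).congr_fun ?_ (measurableSet_Ioi.diff measurableSet_Icc)
      intro x hx
      obtain ⟨hx0, hxn⟩ := hx
      rcases lt_or_ge x (ε/2) with hlt | hge
      · have hx' : x ∈ Ioo (0:ℝ) (ε/2) := ⟨hx0, hlt⟩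
        simp [hF, hP'0a x hx', hP''0a x hx']
      · have hxε : ε < x := by
          by_contra hle
          exact hxn ⟨hge, not_lt.mp hle⟩
        simp [hF, hP'0b x hxε, hP''0b x hxε]
    have hIntF : IntegrableOn F (Ioi 0) := by
      have : Ioi (0:ℝ) ⊆ Icc (ε/2) ε ∪ (Ioi 0 \ Icc (ε/2) ε) := by
        intro x hx
        by_cases hmem : x ∈ Icc (ε/2) ε
        · exact Or.inl hmem
        · exact Or.inr ⟨hx, hmem⟩
      exact (hInt1.union hInt2).mono_set this
    exact hIntF.congr_fun (fun x hx => (hres x hx).symm) measurableSet_Ioi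
end
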